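/- The determinant of the N×N matrix Ḡ with entries Ḡ_{ij} = e^{-k|p_i − p_j|}, where p_1 < p_2 < ⋯ < p_N are real and k ∈ ℂ with Re(k) > 0, equals the product over i = 1,…,N−1 of (1 − e^{-2k(p_{i+1} − p_i)}). In particular Ḡ is invertible. -/

import Mathlib

/-!
Writing `w i = exp (k pᵢ)`, the entries are `w (min i j) / w (max i j)`. Subtracting
`w_{N-1} / w_N` times row `N - 1` from row `N` clears the last row except for the diagonal
entry `1 - (w_{N-1} / w_N)²`, and the remaining minor is the same kind of matrix of size `N`.
-/

open Complex Matrix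

theorem Matrix.det_succ_eq_mul_det_submatrix_of_row {R : Type*} [CommRing R] {n : ℕ}
    (A : Matrix (Fin (n + 1)) (Fin (n + 1)) R) (i : Fin (n + 1))
    (h : ∀ j, j ≠ i → A i j = 0) :
    A.det = A i i * (A.submatrix i.succAbove i.succAbove).det := by
  rw [det_succ_row A i, Fintype.sum_eq_single i fun j hj => by rw [h j hj, mul_zero, zero_mul],
    ← two_mul, pow_mul, neg_one_sq, one_pow, one_mul]

theorem Matrix.det_of_div_min_max {K : Type*} [Field K] :
    ∀ {N : ℕ} (w : Fin (N + 1) → K), (∀ i, w i ≠ 0) →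
      (of fun i j => w (min i j) / w (max i j)).det =
        ∏ i : Fin N, (1 - (w i.castSucc / w i.succ) ^ 2)
  | 0, w, hw => by simp [hw]
  | N + 1, w, hw => by
    set M : Matrix (Fin (N + 2)) (Fin (N + 2)) K := of fun i j => w (min i j) / w (max i j)
    set lst := Fin.last (N + 1)
    set pre := (Fin.last N).castSucc
    set c := w pre / w lst
    have hpre_lt : pre < lst := Fin.castSucc_lt_last _
    set M' := M.updateRow lst (M lst + (-c) • M pre) with hM'
    have hrow : ∀ j, j ≠ lst → M' lst j = 0 := by
      intro j hj
      obtain ⟨j, rfl⟩ := Fin.exists_castSucc_eq.mpr hj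
      have hj_pre : j.castSucc ≤ pre := Fin.castSucc_le_castSucc_iff.mpr (Fin.le_last j)
      have hj_lst : j.castSucc ≤ lst := hj_pre.trans hpre_lt.le
      simp only [M', M, c, updateRow_self, Pi.add_apply, Pi.smul_apply, smul_eq_mul, of_apply,
        min_eq_right hj_lst, max_eq_left hj_lst, min_eq_right hj_pre, max_eq_left hj_pre]
      field_simp [hw]
      ring
    have hdiag : M' lst lst = 1 - c ^ 2 := by
      simp only [M', M, c, updateRow_self, Pi.add_apply, Pi.smul_apply, smul_eq_mul, of_apply,
        min_self, max_self, min_eq_left hpre_lt.le, max_eq_right hpre_lt.le, div_self (hw lst)]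
      ring
    have hminor : M'.submatrix lst.succAbove lst.succAbove =
        of fun i j => (w ∘ Fin.castSucc) (min i j) / (w ∘ Fin.castSucc) (max i j) := by
      ext i j
      have hi : i.castSucc ≠ lst := (Fin.castSucc_lt_last i).ne
      rw [submatrix_apply, show lst.succAbove = Fin.castSucc from Fin.succAbove_last,
        hM', updateRow_ne hi]
      simp only [M, of_apply, Function.comp_apply, Fin.strictMono_castSucc.monotone.map_min,
        Fin.strictMono_castSucc.monotone.map_max]
    rw [← det_updateRow_add_smul_self M hpre_lt.ne' (-c),
      det_succ_eq_mul_det_submatrix_of_row M' lst hrow, hdiag, hminor,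
      det_of_div_min_max (w ∘ Fin.castSucc) fun i => hw _, Fin.prod_univ_castSucc, mul_comm,
      Fin.succ_last]
    rfl

theorem Complex.exp_ne_one_of_re_ne_zero {z : ℂ} (hz : z.re ≠ 0) : exp z ≠ 1 := fun h =>
  hz <| Real.exp_eq_one_iff _ |>.mp <| by rw [← norm_exp, h, norm_one]

theorem Monotone.abs_sub_eq_max_sub_min {α : Type*} [LinearOrder α] {p : α → ℝ}
    (hp : Monotone p) (i j : α) : |p i - p j| = p (max i j) - p (min i j) := by
  rcases le_total i j with h | h
  · rw [abs_sub_comm, abs_of_nonneg (sub_nonneg.mpr (hp h)), max_eq_right h, min_eq_left h]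
  · rw [abs_of_nonneg (sub_nonneg.mpr (hp h)), max_eq_left h, min_eq_right h]

theorem Matrix.det_exp_neg_mul_abs_sub {N : ℕ} {p : Fin (N + 1) → ℝ} (hp : Monotone p) (k : ℂ) :
    (of fun i j : Fin (N + 1) => exp (-k * (|p i - p j| : ℝ))).det =
      ∏ i : Fin N, (1 - exp (-(2 * k) * ((p i.succ - p i.castSucc : ℝ) : ℂ))) := by
  have hentry : ∀ i j, exp (-k * (|p i - p j| : ℝ)) =
      exp (k * p (min i j)) / exp (k * p (max i j)) := fun i j => by
    rw [hp.abs_sub_eq_max_sub_min, ← exp_sub]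
    push_cast
    ring_nf
  have hfactor : ∀ i : Fin N, (exp (k * p i.castSucc) / exp (k * p i.succ)) ^ 2 =
      exp (-(2 * k) * ((p i.succ - p i.castSucc : ℝ) : ℂ)) := fun i => by
    rw [← exp_sub, ← exp_nat_mul]
    push_cast
    ring_nf
  simp only [hentry]
  rw [det_of_div_min_max (fun i => exp (k * p i)) fun i => exp_ne_zero _]
  simp only [hfactor]

theorem stmt5 (N : ℕ) (p : Fin (N+1) → ℝ) (hp : StrictMono p) (k : ℂ) (hk : 0 < k.re) :
    (Matrix.of fun i j : Fin (N+1) =>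
        Complex.exp (-k * (|p i - p j| : ℝ))).det =
      (∏ i : Fin N, (1 - Complex.exp (-(2*k) * ((p i.succ - p i.castSucc : ℝ) : ℂ)))) ∧
    IsUnit (Matrix.of fun i j : Fin (N+1) => Complex.exp (-k * (|p i - p j| : ℝ))) := by
  have hdet := det_exp_neg_mul_abs_sub hp.monotone k
  refine ⟨hdet, (isUnit_iff_isUnit_det _).mpr ?_⟩
  rw [hdet, isUnit_iff_ne_zero, Finset.prod_ne_zero_iff]
  intro i _
  refine sub_ne_zero.mpr (exp_ne_one_of_re_ne_zero ?_).symm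
  have hgap : 0 < p i.succ - p i.castSucc := sub_pos.mpr (hp Fin.castSucc_lt_succ)
  have hcoeff : (-(2 * k)).re < 0 := by simpa using hk
  rw [re_mul_ofReal]
  exact (mul_neg_of_neg_of_pos hcoeff hgap).ne
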